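/- (Alperin's fusion theorem) Let H be a finite group, p a prime, Q a Sylow p-subgroup of H, A a subset of Q, and h an element of H with A^h ⊆ Q. Then there exist an integer n ≥ 1, Sylow p-subgroups Q_1, …, Q_n of H, and elements h_1, …, h_{n−1} of H such that: (i) h = h_1 h_2 ⋯ h_{n−1}; (ii) for each i = 1, …, n the intersection Q ∩ Q_i is tame, i.e. N_Q(Q ∩ Q_i) and N_{Q_i}(Q ∩ Q_i) are Sylow p-subgroups of N_H(Q ∩ Q_i); (iii) for each i = 1, …, n−1 one has h_i ∈ N_H(Q ∩ Q_i); and (iv) A ⊆ Q ∩ Q_1, A^{h_1} ⊆ Q ∩ Q_2, …, A^{h_1 ⋯ h_{n−1}} ⊆ Q ∩ Q_n. -/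

import Mathlib

open Pointwise

/-- `P` (a subgroup of `H`) is a Sylow `p`-subgroup of the subgroup `X` of `H`. -/
def IsSylowIn (p : ℕ) {H : Type*} [Group H] (P X : Subgroup H) : Prop :=
  ∃ S : Sylow p ↥X, (S : Subgroup ↥X) = P.subgroupOf X

/-- The intersection `Q ⊓ Q'` of two Sylow `p`-subgroups is *tame* if `N_Q(Q ⊓ Q')` and
`N_{Q'}(Q ⊓ Q')` are Sylow `p`-subgroups of `N_H(Q ⊓ Q')`. -/
def TameIntersection (p : ℕ) {H : Type*} [Group H] (Q Q' : Sylow p H) : Prop :=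
  IsSylowIn p ((Q : Subgroup H) ⊓ (Subgroup.normalizer (((Q : Subgroup H) ⊓ (Q' : Subgroup H) : Subgroup H) : Set H)))
      (Subgroup.normalizer (((Q : Subgroup H) ⊓ (Q' : Subgroup H) : Subgroup H) : Set H)) ∧
    IsSylowIn p ((Q' : Subgroup H) ⊓ (Subgroup.normalizer (((Q : Subgroup H) ⊓ (Q' : Subgroup H) : Subgroup H) : Set H)))
      (Subgroup.normalizer (((Q : Subgroup H) ⊓ (Q' : Subgroup H) : Subgroup H) : Set H))

namespace AlperinAux

variable {p : ℕ} [Fact p.Prime] {H : Type*} [Group H] [Finite H]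

/-- conjugation of a subgroup : `cj x E = x E x⁻¹`. -/
abbrev cj (x : H) (E : Subgroup H) : Subgroup H := MulAut.conj x • E

lemma mem_cj {x a : H} {E : Subgroup H} : a ∈ cj x E ↔ x⁻¹ * a * x ∈ E := by
  rw [cj, Subgroup.mem_pointwise_smul_iff_inv_smul_mem]
  simp [MulAut.smul_def, mul_assoc]

lemma cj_cj (x y : H) (E : Subgroup H) : cj x (cj y E) = cj (x * y) E := by
  rw [cj, cj, cj, smul_smul, ← map_mul]

@[simp] lemma cj_one (E : Subgroup H) : cj 1 E = E := by
  rw [cj, map_one, one_smul]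

lemma cj_inv_cj (x : H) (E : Subgroup H) : cj x⁻¹ (cj x E) = E := by
  rw [cj_cj, inv_mul_cancel, cj_one]

lemma cj_le_cj {E F : Subgroup H} (x : H) (h : E ≤ F) : cj x E ≤ cj x F := by
  intro a ha; rw [mem_cj] at *; exact h ha

lemma cj_inf (x : H) (E F : Subgroup H) : cj x (E ⊓ F) = cj x E ⊓ cj x F :=
  Subgroup.smul_inf _ _ _

lemma cj_normalizer (x : H) (E : Subgroup H) :
    cj x (Subgroup.normalizer (((E : Subgroup H) : Set H))) = (Subgroup.normalizer ((((cj x E) : Subgroup H) : Set H))) := by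
  have := Subgroup.map_equiv_normalizer_eq E (MulAut.conj x : H ≃* H)
  simp [cj, Subgroup.pointwise_smul_def] at this ⊢; exact this

lemma mem_normalizer_iff_cj_eq {x : H} {E : Subgroup H} :
    x ∈ (Subgroup.normalizer (((E : Subgroup H) : Set H))) ↔ cj x E = E := by
  constructor
  · intro hx
    ext a
    rw [mem_cj]
    rw [Subgroup.mem_normalizer_iff] at hx
    simpa [mul_assoc] using hx (x⁻¹ * a * x)
  · intro hE
    rw [Subgroup.mem_normalizer_iff]
    intro h
    conv_rhs => rw [← hE, mem_cj]
    simp [mul_assoc]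

lemma cj_eq_of_mem_normalizer {x : H} {E : Subgroup H} (hx : x ∈ (Subgroup.normalizer (((E : Subgroup H) : Set H)))) :
    cj x E = E := mem_normalizer_iff_cj_eq.mp hx

lemma card_cj (x : H) (E : Subgroup H) : Nat.card (cj x E) = Nat.card E :=
  (Nat.card_congr (Subgroup.equivSMul (MulAut.conj x) E).toEquiv).symm

lemma mem_cj_inv {x a : H} {E : Subgroup H} : a ∈ cj x⁻¹ E ↔ x * a * x⁻¹ ∈ E := by
  rw [mem_cj, inv_inv]

variable (P : Sylow p H)

/-- A decomposition of `g` into a chain of elements of normalizers of tame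
intersections, transporting `E`. -/
inductive Decomp : Subgroup H → H → Prop
  | nil (E : Subgroup H) : Decomp E 1
  | cons {E : Subgroup H} (R : Sylow p H) {x g : H}
      (tame : TameIntersection p P R)
      (hE : E ≤ (P : Subgroup H) ⊓ (R : Subgroup H))
      (hx : x ∈ (Subgroup.normalizer (((((P : Subgroup H) ⊓ (R : Subgroup H)) : Subgroup H) : Set H))))
      (tail : Decomp (cj x⁻¹ E) g) : Decomp E (x * g)

variable {P}

lemma Decomp.mono {E g} (h : Decomp P E g) : ∀ {F : Subgroup H}, F ≤ E → Decomp P F g := by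
  induction h with
  | nil E => exact fun _ => Decomp.nil _
  | cons R tame hE hx tail ih =>
      intro F hF
      exact Decomp.cons R tame (hF.trans hE) hx (ih (cj_le_cj _ hF))

lemma Decomp.append {E g g'} (h : Decomp P E g) (h' : Decomp P (cj g⁻¹ E) g') :
    Decomp P E (g * g') := by
  induction h with
  | nil E => simpa using h'.mono (by simp)
  | cons R tame hE hx tail ih =>
      rename_i E' x g₀
      rw [mul_assoc]
      refine Decomp.cons R tame hE hx (ih ?_)
      have : cj (x * g₀)⁻¹ E' = cj g₀⁻¹ (cj x⁻¹ E') := by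
        rw [cj_cj, mul_inv_rev]
      rwa [← this]

lemma Decomp.le_P {E g} (h : Decomp P E g) (hE : E ≤ P) : cj g⁻¹ E ≤ P := by
  induction h with
  | nil E => simpa using hE
  | cons R tame hE' hx tail ih =>
      rename_i E' x g₀
      have h1 : cj x⁻¹ E' ≤ (P : Subgroup H) ⊓ R := by
        have := cj_le_cj x⁻¹ hE'
        rwa [cj_eq_of_mem_normalizer (Subgroup.inv_mem _ hx)] at this
      have := ih (h1.trans inf_le_left)
      rwa [mul_inv_rev, ← cj_cj]

lemma Decomp.single {E : Subgroup H} (R : Sylow p H) {x : H}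
    (tame : TameIntersection p P R) (hE : E ≤ (P : Subgroup H) ⊓ R)
    (hx : x ∈ (Subgroup.normalizer (((((P : Subgroup H) ⊓ (R : Subgroup H)) : Subgroup H) : Set H)))) : Decomp P E x := by
  have := Decomp.cons (P := P) R tame hE hx (Decomp.nil _)
  simpa using this


lemma tame_self (P : Sylow p H) : TameIntersection p P P := by
  have h1 : (P : Subgroup H) ⊓ ↑P = ↑P := inf_idem _
  rw [TameIntersection, h1]
  have h2 : (P : Subgroup H) ⊓ (Subgroup.normalizer ((((P : Subgroup H) : Subgroup H) : Set H))) = ↑P :=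
    inf_eq_left.mpr Subgroup.le_normalizer
  rw [h2]
  constructor <;> exact ⟨P.subtype Subgroup.le_normalizer, P.coe_subtype _⟩

lemma extraction {P : Sylow p H} {E : Subgroup H} {g : H} (h : Decomp P E g) (hEP : E ≤ ↑P) :
    ∃ (m : ℕ) (Qs : Fin (m + 1) → Sylow p H) (hs : Fin m → H),
      g = (List.ofFn hs).prod ∧
      (∀ i : Fin (m + 1), TameIntersection p P (Qs i)) ∧
      (∀ i : Fin m,
        hs i ∈ (Subgroup.normalizer (((((P : Subgroup H) ⊓ (Qs i.castSucc : Subgroup H)) : Subgroup H) : Set H)))) ∧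
      (∀ i : Fin (m + 1), ∀ a ∈ E,
        (((List.ofFn hs).take i.val).prod)⁻¹ * a * ((List.ofFn hs).take i.val).prod ∈
          (P : Subgroup H) ⊓ (Qs i : Subgroup H)) := by
  induction h with
  | nil E =>
      refine ⟨0, fun _ => P, Fin.elim0, by simp, fun _ => tame_self P, fun i => i.elim0, ?_⟩
      intro i a ha
      simp only [List.ofFn_zero, List.take_nil, List.prod_nil, inv_one, one_mul, mul_one]
      exact Subgroup.mem_inf.mpr ⟨hEP ha, hEP ha⟩
  | cons R tame hE hx tail ih =>
      rename_i E' x g₀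
      have hE'P : cj x⁻¹ E' ≤ ↑P := by
        have h1 := cj_le_cj x⁻¹ hE
        rw [cj_eq_of_mem_normalizer (Subgroup.inv_mem _ hx)] at h1
        exact h1.trans inf_le_left
      obtain ⟨m, Qs, hs, hprod, htame, hnorm, hmem⟩ := ih hE'P
      have hofn : List.ofFn (Fin.cons x hs : Fin (m+1) → H) = x :: List.ofFn hs := by
        simp [List.ofFn_succ]
      refine ⟨m + 1, Fin.cons R Qs, Fin.cons x hs, ?_, ?_, ?_, ?_⟩
      · rw [hofn, List.prod_cons, hprod]
      · intro i
        refine Fin.cases ?_ ?_ i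
        · simpa using tame
        · intro j; simpa using htame j
      · intro i
        refine Fin.cases ?_ ?_ i
        · simpa using hx
        · intro j
          have := hnorm j
          rw [← Fin.succ_castSucc]; simp only [Fin.cons_succ]; exact this
      · intro i a ha
        refine Fin.cases ?_ ?_ i
        · simpa using hE ha
        · intro j
          have hb : x⁻¹ * a * x ∈ cj x⁻¹ E' := by
            rw [mem_cj]
            simpa [mul_assoc] using ha
          have := hmem j _ hb
          rw [hofn]
          simpa [List.take_succ_cons, List.prod_cons, mul_inv_rev, mul_assoc] using this


section Helpers

lemma eq_of_le_card {K L : Subgroup H} (h : K ≤ L) (hc : Nat.card L ≤ Nat.card K) : K = L := by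
  apply SetLike.coe_injective
  refine Set.eq_of_subset_of_ncard_le h ?_ (Set.toFinite _)
  rwa [← Nat.card_coe_set_eq, ← Nat.card_coe_set_eq]

lemma card_lt_of_lt {K L : Subgroup H} (h : K < L) : Nat.card K < Nat.card L := by
  refine lt_of_le_of_ne (Subgroup.card_le_of_le h.le) fun he => h.ne ?_
  exact eq_of_le_card h.le he.ge

/-- In a finite `p`-group, a proper subgroup is properly contained in its normalizer
(relative version). -/
lemma lt_norm_inf {D K : Subgroup H} (hK : IsPGroup p ↥K) (hDK : D < K) :
    D < K ⊓ (Subgroup.normalizer (((D : Subgroup H) : Set H))) := by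
  have hDK' : D ≤ K := hDK.le
  have hne : D.subgroupOf K ≠ ⊤ := by
    intro hT
    exact hDK.ne (le_antisymm hDK' (Subgroup.subgroupOf_eq_top.mp hT))
  have hnilp : Group.IsNilpotent ↥K := hK.isNilpotent
  have hcond := normalizerCondition_of_isNilpotent (G := ↥K)
  have hlt := hcond (D.subgroupOf K) (lt_of_le_of_ne le_top hne)
  obtain ⟨u, hu1, hu2⟩ := SetLike.exists_of_lt hlt
  have huD : (↑u : H) ∉ D := fun hd => hu2 (by simpa [Subgroup.mem_subgroupOf] using hd)
  have huN : (↑u : H) ∈ (Subgroup.normalizer (((D : Subgroup H) : Set H))) := by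
    rw [Subgroup.mem_normalizer_iff]
    intro x
    constructor
    · intro hx
      have hxK : x ∈ K := hDK' hx
      have : (⟨x, hxK⟩ : ↥K) ∈ D.subgroupOf K := by simpa [Subgroup.mem_subgroupOf] using hx
      have := (Subgroup.mem_normalizer_iff.mp hu1 ⟨x, hxK⟩).mp this
      simpa [Subgroup.mem_subgroupOf] using this
    · intro hx
      have hxK' : (↑u * x * (↑u)⁻¹ : H) ∈ K := hDK' hx
      have hxK : x ∈ K := by
        have := mul_mem (mul_mem (inv_mem u.2) hxK') u.2
        simpa [mul_assoc] using this
      have h2 : (⟨↑u * x * (↑u)⁻¹, hxK'⟩ : ↥K) = u * ⟨x, hxK⟩ * u⁻¹ := rfl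
      have : u * ⟨x, hxK⟩ * u⁻¹ ∈ D.subgroupOf K := by
        rw [← h2]
        simpa [Subgroup.mem_subgroupOf] using hx
      have := (Subgroup.mem_normalizer_iff.mp hu1 ⟨x, hxK⟩).mpr this
      simpa [Subgroup.mem_subgroupOf] using this
  refine lt_of_le_of_ne (le_inf hDK' Subgroup.le_normalizer) fun he => huD ?_
  rw [he]
  exact ⟨u.2, huN⟩

/-- Image in `H` of a Sylow subgroup of a subgroup `X ≤ H`. -/
abbrev mapS {X : Subgroup H} (W : Sylow p ↥X) : Subgroup H :=
  (W : Subgroup ↥X).map X.subtype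

lemma mapS_le {X : Subgroup H} (W : Sylow p ↥X) : mapS W ≤ X :=
  Subgroup.map_subtype_le _

lemma mapS_pgroup {X : Subgroup H} (W : Sylow p ↥X) : IsPGroup p ↥(mapS W) :=
  W.2.map _

lemma subgroupOf_mapS {X : Subgroup H} (W : Sylow p ↥X) :
    (mapS W).subgroupOf X = (W : Subgroup ↥X) :=
  Subgroup.comap_map_eq_self_of_injective X.subtype_injective _

lemma card_mapS {X : Subgroup H} (W : Sylow p ↥X) :
    Nat.card (mapS W) = Nat.card (W : Subgroup ↥X) :=
  Nat.card_congr (Subgroup.equivMapOfInjective _ _ X.subtype_injective).toEquiv.symm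

lemma exists_sylowIn {X K : Subgroup H} (hK : IsPGroup p ↥K) (hKX : K ≤ X) :
    ∃ W : Sylow p ↥X, K ≤ mapS W := by
  have hK' : IsPGroup p ↥(K.subgroupOf X) :=
    IsPGroup.of_equiv hK (Subgroup.subgroupOfEquivOfLe hKX).symm
  obtain ⟨W, hW⟩ := hK'.exists_le_sylow
  refine ⟨W, ?_⟩
  have := Subgroup.map_subtype_le_map_subtype.mpr hW
  rwa [Subgroup.subgroupOf_map_subtype, inf_eq_left.mpr hKX] at this

lemma isSylowIn_iff {A X : Subgroup H} (hAX : A ≤ X) :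
    IsSylowIn p A X ↔ ∃ W : Sylow p ↥X, mapS W = A := by
  constructor
  · rintro ⟨S, hS⟩
    refine ⟨S, ?_⟩
    rw [mapS, hS, Subgroup.subgroupOf_map_subtype, inf_eq_left.mpr hAX]
  · rintro ⟨W, hW⟩
    exact ⟨W, by rw [← hW, subgroupOf_mapS]⟩

lemma cj_mapS {X : Subgroup H} (n : ↥X) (W : Sylow p ↥X) :
    cj ↑n (mapS W) = mapS (n • W) := by
  have hcoe : ((n • W : Sylow p ↥X) : Subgroup ↥X) = MulAut.conj n • (W : Subgroup ↥X) := rfl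
  ext a
  rw [mem_cj]
  constructor
  · rintro ha
    obtain ⟨c, hc, hc2⟩ := ha
    have hb : (n * c * n⁻¹ : ↥X) ∈ ((n • W : Sylow p ↥X) : Subgroup ↥X) := by
      rw [hcoe, Subgroup.mem_pointwise_smul_iff_inv_smul_mem]
      simp [MulAut.smul_def, mul_assoc] at hc ⊢; exact hc
    refine ⟨n * c * n⁻¹, hb, ?_⟩
    simp only [Subgroup.coe_subtype] at hc2 ⊢
    push_cast
    rw [hc2]
    group
  · rintro ⟨b, hb, rfl⟩
    have hb' : b ∈ (MulAut.conj n • (W : Subgroup ↥X) : Subgroup ↥X) := by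
      rw [← hcoe]
      exact hb
    rw [Subgroup.mem_pointwise_smul_iff_inv_smul_mem] at hb'
    refine ⟨n⁻¹ * b * n, by have := hb'; simp [MulAut.smul_def, mul_assoc] at this ⊢; exact this, ?_⟩
    simp only [Subgroup.coe_subtype]
    push_cast
    group

lemma sylow_card_mapS_eq {X : Subgroup H} (W₁ W₂ : Sylow p ↥X) :
    Nat.card (mapS W₁) = Nat.card (mapS W₂) := by
  obtain ⟨n, hn⟩ := MulAction.exists_smul_eq ↥X W₁ W₂
  rw [← hn, ← cj_mapS, card_cj]

end Helpers


instance : Finite (Sylow p H) :=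
  Finite.of_injective (fun S : Sylow p H => ((S : Subgroup H) : Set H))
    fun _ _ hab => Sylow.ext (SetLike.coe_injective hab)

lemma lem1 (P Q₁ : Sylow p H)
    (hlt : ((P : Subgroup H) ⊓ (Q₁ : Subgroup H)) < (P : Subgroup H))
    (hwell : IsSylowIn p
      ((P : Subgroup H) ⊓ (Subgroup.normalizer (((((P : Subgroup H) ⊓ (Q₁ : Subgroup H)) : Subgroup H) : Set H))))
      (Subgroup.normalizer (((((P : Subgroup H) ⊓ (Q₁ : Subgroup H)) : Subgroup H) : Set H))))
    (rec : ∀ Q'' : Sylow p H,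
      Nat.card ↥((P : Subgroup H) ⊓ (Q₁ : Subgroup H)) <
        Nat.card ↥((P : Subgroup H) ⊓ (Q'' : Subgroup H)) →
      ∃ x : H, Decomp P ((P : Subgroup H) ⊓ (Q'' : Subgroup H)) x ∧
        cj x⁻¹ (Q'' : Subgroup H) = ↑P) :
    ∃ x : H, Decomp P ((P : Subgroup H) ⊓ (Q₁ : Subgroup H)) x ∧
      cj x⁻¹ (Q₁ : Subgroup H) = ↑P := by
  set E : Subgroup H := (P : Subgroup H) ⊓ (Q₁ : Subgroup H) with hEdef
  set N : Subgroup H := (Subgroup.normalizer (((E : Subgroup H) : Set H))) with hNdef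
  have hEP : E ≤ (P : Subgroup H) := inf_le_left
  have hEQ : E < (Q₁ : Subgroup H) := by
    refine lt_of_le_of_ne inf_le_right fun he => ?_
    have h1 : (Q₁ : Subgroup H) ≤ ↑P := he ▸ inf_le_left
    have h2 : (P : Subgroup H) = ↑Q₁ := Q₁.3 P.2 h1
    exact hlt.ne (by rw [hEdef, ← h2, inf_idem])
  have hNQlt : E < (Q₁ : Subgroup H) ⊓ N := lt_norm_inf Q₁.2 hEQ
  have hNPlt : E < (P : Subgroup H) ⊓ N := lt_norm_inf P.2 hlt
  -- the Sylow `R ⊇ S ⊇ N_P(E)`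
  obtain ⟨S₀, hS₀⟩ := exists_sylowIn (P.2.to_le inf_le_left :
    IsPGroup p ↥((P : Subgroup H) ⊓ N)) inf_le_right
  obtain ⟨R, hSR⟩ := (mapS_pgroup S₀).exists_le_sylow
  have hPNR : (P : Subgroup H) ⊓ N ≤ ↑R := hS₀.trans hSR
  have hER : E ≤ (P : Subgroup H) ⊓ ↑R := le_inf hEP (hNPlt.le.trans hPNR)
  have hcardR : Nat.card ↥E < Nat.card ↥((P : Subgroup H) ⊓ (R : Subgroup H)) :=
    lt_of_lt_of_le (card_lt_of_lt hNPlt)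
      (Subgroup.card_le_of_le (le_inf inf_le_left hPNR))
  obtain ⟨y, hy, hyR⟩ := rec R hcardR
  -- the Sylow `V ⊇ T ⊇ N_{Q₁}(E)`
  obtain ⟨T₀, hT₀⟩ := exists_sylowIn (Q₁.2.to_le inf_le_left :
    IsPGroup p ↥((Q₁ : Subgroup H) ⊓ N)) inf_le_right
  obtain ⟨V, hTV⟩ := (mapS_pgroup T₀).exists_le_sylow
  have hNQV : (Q₁ : Subgroup H) ⊓ N ≤ (V : Subgroup H) := hT₀.trans hTV
  have hEV : E ≤ (V : Subgroup H) := hNQlt.le.trans hNQV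
  by_cases hPV : Nat.card ↥E < Nat.card ↥((P : Subgroup H) ⊓ (V : Subgroup H))
  · -- route through `V`
    obtain ⟨z, hz, hzV⟩ := rec V hPV
    set Q₂ : Sylow p H := MulAut.conj z⁻¹ • Q₁ with hQ₂def
    have hQ₂coe : (Q₂ : Subgroup H) = cj z⁻¹ (Q₁ : Subgroup H) := rfl
    have hcard₂ : Nat.card ↥E < Nat.card ↥((P : Subgroup H) ⊓ (Q₂ : Subgroup H)) := by
      have h1 : cj z⁻¹ ((Q₁ : Subgroup H) ⊓ N) ≤ (P : Subgroup H) ⊓ (Q₂ : Subgroup H) := by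
        refine le_inf ?_ ?_
        · have h2 := cj_le_cj z⁻¹ hNQV
          rwa [hzV] at h2
        · rw [hQ₂coe]
          exact cj_le_cj _ inf_le_left
      calc Nat.card ↥E < Nat.card ↥((Q₁ : Subgroup H) ⊓ N) := card_lt_of_lt hNQlt
        _ = Nat.card ↥(cj z⁻¹ ((Q₁ : Subgroup H) ⊓ N)) := (card_cj _ _).symm
        _ ≤ _ := Subgroup.card_le_of_le h1
    obtain ⟨x₂, hx₂, hx₂Q⟩ := rec Q₂ hcard₂
    refine ⟨z * x₂, ?_, ?_⟩
    · refine (hz.mono (le_inf hEP hEV)).append (hx₂.mono (le_inf ?_ ?_))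
      · have h2 := cj_le_cj z⁻¹ hEV
        rwa [hzV] at h2
      · rw [hQ₂coe]
        exact cj_le_cj _ inf_le_right
    · rw [mul_inv_rev, ← cj_cj, ← hQ₂coe, hx₂Q]
  · -- the tame case
    push_neg at hPV
    have hEPV : E = (P : Subgroup H) ⊓ (V : Subgroup H) :=
      eq_of_le_card (le_inf hEP hEV) hPV
    have hVN : (V : Subgroup H) ⊓ N = mapS T₀ := by
      have h1 : mapS T₀ ≤ (V : Subgroup H) ⊓ N := le_inf hTV (mapS_le T₀)
      have h2 : ((V : Subgroup H) ⊓ N).subgroupOf N = (T₀ : Subgroup ↥N) := by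
        refine T₀.3 ?_ ?_
        · exact IsPGroup.of_equiv (V.2.to_le inf_le_left)
            (Subgroup.subgroupOfEquivOfLe inf_le_right).symm
        · rw [← subgroupOf_mapS T₀]
          exact Subgroup.comap_mono h1
      have h3 := congrArg (Subgroup.map N.subtype) h2
      rwa [Subgroup.subgroupOf_map_subtype, inf_assoc, inf_idem] at h3
    have htame : TameIntersection p P V := by
      refine ⟨?_, ?_⟩
      · rw [← hEPV]
        exact hwell
      · rw [← hEPV]
        exact (isSylowIn_iff inf_le_right).mpr ⟨T₀, hVN.symm⟩
    obtain ⟨S₀', hS₀'⟩ := (isSylowIn_iff inf_le_right).mp hwell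
    obtain ⟨n, hn⟩ := MulAction.exists_smul_eq ↥N T₀ S₀'
    set g : H := (↑n : H)⁻¹ with hgdef
    have hgN : g ∈ N := inv_mem n.2
    have hcjNQ : cj (↑n : H) ((Q₁ : Subgroup H) ⊓ N) ≤ (P : Subgroup H) ⊓ N := by
      have h1 := cj_le_cj (↑n : H) hT₀
      rwa [cj_mapS, hn, hS₀'] at h1
    have hstep1 : Decomp P E g := by
      refine Decomp.single V htame (by rw [← hEPV]) ?_
      rw [← hEPV]
      exact hgN
    have hbase1 : cj g⁻¹ E = E := by
      rw [hgdef, inv_inv]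
      exact cj_eq_of_mem_normalizer n.2
    set x₁ : H := g * y with hx₁def
    set Q₂ : Sylow p H := MulAut.conj x₁⁻¹ • Q₁ with hQ₂def
    have hQ₂coe : (Q₂ : Subgroup H) = cj x₁⁻¹ (Q₁ : Subgroup H) := rfl
    have hcjx₁ : ∀ F : Subgroup H, cj x₁⁻¹ F = cj y⁻¹ (cj (↑n : H) F) := by
      intro F
      rw [hx₁def, mul_inv_rev, ← cj_cj, hgdef, inv_inv]
    have hcard₂ : Nat.card ↥E < Nat.card ↥((P : Subgroup H) ⊓ (Q₂ : Subgroup H)) := by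
      have h1 : cj x₁⁻¹ ((Q₁ : Subgroup H) ⊓ N) ≤ (P : Subgroup H) ⊓ (Q₂ : Subgroup H) := by
        refine le_inf ?_ ?_
        · rw [hcjx₁]
          have h2 := cj_le_cj y⁻¹ (hcjNQ.trans hPNR)
          rwa [hyR] at h2
        · rw [hQ₂coe]
          exact cj_le_cj _ inf_le_left
      calc Nat.card ↥E < Nat.card ↥((Q₁ : Subgroup H) ⊓ N) := card_lt_of_lt hNQlt
        _ = Nat.card ↥(cj x₁⁻¹ ((Q₁ : Subgroup H) ⊓ N)) := (card_cj _ _).symm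
        _ ≤ _ := Subgroup.card_le_of_le h1
    obtain ⟨x₂, hx₂, hx₂Q⟩ := rec Q₂ hcard₂
    refine ⟨x₁ * x₂, ?_, ?_⟩
    · have hmono₂ : cj y⁻¹ E ≤ (P : Subgroup H) ⊓ (Q₂ : Subgroup H) := by
        refine le_inf ?_ ?_
        · have h2 := cj_le_cj y⁻¹ (hER.trans inf_le_right)
          rwa [hyR] at h2
        · have h3 : cj y⁻¹ E = cj x₁⁻¹ E := by
            rw [hcjx₁, cj_eq_of_mem_normalizer n.2]
          rw [h3, hQ₂coe]
          exact cj_le_cj _ inf_le_right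
      have hinner : Decomp P E (y * x₂) := hy.mono hER |>.append (hx₂.mono hmono₂)
      have houter : Decomp P E (g * (y * x₂)) := by
        refine hstep1.append ?_
        rw [hbase1]
        exact hinner
      rwa [hx₁def, mul_assoc]
    · rw [mul_inv_rev, ← cj_cj, ← hQ₂coe, hx₂Q]

lemma pg_cj {K : Subgroup H} (hK : IsPGroup p ↥K) (x : H) : IsPGroup p ↥(cj x K) :=
  IsPGroup.of_equiv hK (Subgroup.equivSMul (MulAut.conj x) K)

theorem core (P Q' : Sylow p H) :
    ∃ x : H, Decomp P ((P : Subgroup H) ⊓ (Q' : Subgroup H)) x ∧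
      cj x⁻¹ (Q' : Subgroup H) = (P : Subgroup H) := by
  suffices hmain : ∀ k : ℕ, ∀ Q' : Sylow p H,
      Nat.card ↥(P : Subgroup H) ≤ k + Nat.card ↥((P : Subgroup H) ⊓ (Q' : Subgroup H)) →
      ∃ x : H, Decomp P ((P : Subgroup H) ⊓ (Q' : Subgroup H)) x ∧
        cj x⁻¹ (Q' : Subgroup H) = (P : Subgroup H) by
    exact hmain (Nat.card ↥(P : Subgroup H)) Q' (Nat.le_add_right _ _)
  intro k
  induction k using Nat.strong_induction_on with
  | _ k ih =>
  intro Q' hk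
  by_cases hle : (P : Subgroup H) ≤ (Q' : Subgroup H)
  · have hQP : (Q' : Subgroup H) = ↑P := P.3 Q'.2 hle
    exact ⟨1, Decomp.nil _, by rw [inv_one, cj_one, hQP]⟩
  · have hlt : (P : Subgroup H) ⊓ (Q' : Subgroup H) < (P : Subgroup H) :=
      lt_of_le_of_ne inf_le_left fun he => hle (by rw [← he]; exact inf_le_right)
    set D : Subgroup H := (P : Subgroup H) ⊓ (Q' : Subgroup H) with hDdef
    have hcardD : Nat.card ↥D < Nat.card ↥(P : Subgroup H) := card_lt_of_lt hlt
    have hrec : ∀ Q'' : Sylow p H,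
        Nat.card ↥D < Nat.card ↥((P : Subgroup H) ⊓ (Q'' : Subgroup H)) →
        ∃ x : H, Decomp P ((P : Subgroup H) ⊓ (Q'' : Subgroup H)) x ∧
          cj x⁻¹ (Q'' : Subgroup H) = (P : Subgroup H) := by
      intro Q'' hc
      refine ih (k - 1) (by omega) Q'' (by omega)
    set N : Subgroup H := (Subgroup.normalizer (((D : Subgroup H) : Set H))) with hNdef
    have hNPlt : D < (P : Subgroup H) ⊓ N := lt_norm_inf P.2 hlt
    obtain ⟨S₀, hS₀⟩ := exists_sylowIn (P.2.to_le inf_le_left :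
      IsPGroup p ↥((P : Subgroup H) ⊓ N)) inf_le_right
    obtain ⟨R, hSR⟩ := (mapS_pgroup S₀).exists_le_sylow
    have hPNR : (P : Subgroup H) ⊓ N ≤ (R : Subgroup H) := hS₀.trans hSR
    have hDR : D ≤ (R : Subgroup H) := hNPlt.le.trans hPNR
    have hcardR : Nat.card ↥D < Nat.card ↥((P : Subgroup H) ⊓ (R : Subgroup H)) :=
      lt_of_lt_of_le (card_lt_of_lt hNPlt)
        (Subgroup.card_le_of_le (le_inf inf_le_left hPNR))
    obtain ⟨y, hy, hyR⟩ := hrec R hcardR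
    have hDPR : D ≤ (P : Subgroup H) ⊓ (R : Subgroup H) := le_inf inf_le_left hDR
    set D' : Subgroup H := cj y⁻¹ D with hD'def
    set Q₂ : Sylow p H := MulAut.conj y⁻¹ • Q' with hQ₂def
    have hQ₂coe : (Q₂ : Subgroup H) = cj y⁻¹ (Q' : Subgroup H) := rfl
    have hD'P : D' ≤ (P : Subgroup H) := by
      rw [hD'def, ← hyR]
      exact cj_le_cj _ hDR
    have hD'Q₂ : D' ≤ (Q₂ : Subgroup H) := by
      rw [hD'def, hQ₂coe]
      exact cj_le_cj _ inf_le_right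
    have hcardD' : Nat.card ↥D' = Nat.card ↥D := card_cj _ _
    have hwell : IsSylowIn p ((P : Subgroup H) ⊓ (Subgroup.normalizer (((D' : Subgroup H) : Set H)))) (Subgroup.normalizer (((D' : Subgroup H) : Set H))) := by
      set N' : Subgroup H := (Subgroup.normalizer (((D' : Subgroup H) : Set H))) with hN'def
      have hN' : N' = cj y⁻¹ N := (cj_normalizer y⁻¹ D).symm
      have hS'P : cj y⁻¹ (mapS S₀) ≤ (P : Subgroup H) := by
        rw [← hyR]
        exact cj_le_cj _ hSR
      have hS'N' : cj y⁻¹ (mapS S₀) ≤ N' := by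
        rw [hN']
        exact cj_le_cj _ (mapS_le S₀)
      obtain ⟨W, hW⟩ := exists_sylowIn (P.2.to_le inf_le_left :
        IsPGroup p ↥((P : Subgroup H) ⊓ N')) inf_le_right
      have hcardW : Nat.card ↥(mapS W) ≤ Nat.card ↥(mapS S₀) := by
        have h1 : cj y (mapS W) ≤ N := by
          have h0 := cj_le_cj y (mapS_le W)
          have h0' : cj y N' = N := by
            rw [hN', cj_cj, mul_inv_cancel, cj_one]
          rwa [h0'] at h0
        obtain ⟨W₂, hW₂⟩ := exists_sylowIn (pg_cj (mapS_pgroup W) y) h1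
        have h2 : Nat.card ↥(cj y (mapS W)) ≤ Nat.card ↥(mapS W₂) :=
          Subgroup.card_le_of_le hW₂
        have h3 : Nat.card ↥(mapS W₂) = Nat.card ↥(mapS S₀) := sylow_card_mapS_eq W₂ S₀
        calc Nat.card ↥(mapS W) = Nat.card ↥(cj y (mapS W)) := (card_cj _ _).symm
          _ ≤ Nat.card ↥(mapS S₀) := h2.trans h3.le
      have hfinal : (P : Subgroup H) ⊓ N' = mapS W := by
        refine eq_of_le_card hW ?_
        calc Nat.card ↥(mapS W) ≤ Nat.card ↥(mapS S₀) := hcardW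
          _ = Nat.card ↥(cj y⁻¹ (mapS S₀)) := (card_cj _ _).symm
          _ ≤ Nat.card ↥((P : Subgroup H) ⊓ N') :=
              Subgroup.card_le_of_le (le_inf hS'P hS'N')
      exact (isSylowIn_iff inf_le_right).mpr ⟨W, hfinal.symm⟩
    by_cases hc2 : Nat.card ↥D < Nat.card ↥((P : Subgroup H) ⊓ (Q₂ : Subgroup H))
    · obtain ⟨x₂, hx₂, hx₂Q⟩ := hrec Q₂ hc2
      refine ⟨y * x₂, ?_, ?_⟩
      · exact (hy.mono hDPR).append (hx₂.mono (le_inf hD'P hD'Q₂))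
      · rw [mul_inv_rev, ← cj_cj, ← hQ₂coe, hx₂Q]
    · push_neg at hc2
      have hPQ₂ : (P : Subgroup H) ⊓ (Q₂ : Subgroup H) = D' :=
        (eq_of_le_card (le_inf hD'P hD'Q₂) (by rw [hcardD']; exact hc2)).symm
      have hlt₂ : (P : Subgroup H) ⊓ (Q₂ : Subgroup H) < (P : Subgroup H) := by
        rw [hPQ₂]
        refine lt_of_le_of_ne hD'P fun he => ?_
        have h5 : Nat.card ↥D' = Nat.card ↥(P : Subgroup H) := by rw [he]
        omega
      have hwell₂ : IsSylowIn p
          ((P : Subgroup H) ⊓ (Subgroup.normalizer (((((P : Subgroup H) ⊓ (Q₂ : Subgroup H)) : Subgroup H) : Set H))))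
          (Subgroup.normalizer (((((P : Subgroup H) ⊓ (Q₂ : Subgroup H)) : Subgroup H) : Set H))) := by
        rw [hPQ₂]
        exact hwell
      have hrec₂ : ∀ Q'' : Sylow p H,
          Nat.card ↥((P : Subgroup H) ⊓ (Q₂ : Subgroup H)) <
            Nat.card ↥((P : Subgroup H) ⊓ (Q'' : Subgroup H)) →
          ∃ x : H, Decomp P ((P : Subgroup H) ⊓ (Q'' : Subgroup H)) x ∧
            cj x⁻¹ (Q'' : Subgroup H) = (P : Subgroup H) := by
        intro Q'' hcc
        rw [hPQ₂, hcardD'] at hcc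
        exact hrec Q'' hcc
      obtain ⟨x', hx', hx'Q⟩ := lem1 P Q₂ hlt₂ hwell₂ hrec₂
      refine ⟨y * x', ?_, ?_⟩
      · refine (hy.mono hDPR).append (hx'.mono ?_)
        rw [hPQ₂]
      · rw [mul_inv_rev, ← cj_cj, ← hQ₂coe, hx'Q]

end AlperinAux

open AlperinAux in
/-- Alperin's fusion theorem. Here `n = m + 1`, the Sylow subgroups are
`Q_1, …, Q_n` (indexed by `Fin (m+1)`), the elements are `h_1, …, h_{n-1}` (indexed by
`Fin m`), and `A^g = g⁻¹ A g`. -/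
theorem alperin_fusion
    (p : ℕ) [Fact p.Prime] (H : Type*) [Group H] [Finite H]
    (Q : Sylow p H) (A : Set H) (h : H)
    (hA : A ⊆ (Q : Subgroup H))
    (hAh : (fun a => h⁻¹ * a * h) '' A ⊆ (Q : Subgroup H)) :
    ∃ (m : ℕ) (Qs : Fin (m + 1) → Sylow p H) (hs : Fin m → H),
      h = (List.ofFn hs).prod ∧
      (∀ i : Fin (m + 1), TameIntersection p Q (Qs i)) ∧
      (∀ i : Fin m,
        hs i ∈ (Subgroup.normalizer (((((Q : Subgroup H) ⊓ (Qs i.castSucc : Subgroup H)) : Subgroup H) : Set H)))) ∧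
      (∀ i : Fin (m + 1), ∀ a ∈ A,
        (((List.ofFn hs).take i.val).prod)⁻¹ * a * ((List.ofFn hs).take i.val).prod ∈
          (Q : Subgroup H) ⊓ (Qs i : Subgroup H)) := by
  classical
  set Q' : Sylow p H := MulAut.conj h • Q with hQ'def
  have hQ'coe : (Q' : Subgroup H) = cj h ↑Q := rfl
  obtain ⟨x, hd, h1⟩ := core Q Q'
  set w : H := x⁻¹ * h with hwdef
  have hwQ : cj w (Q : Subgroup H) = ↑Q := by
    rw [hwdef, ← cj_cj, ← hQ'coe, h1]
  have hbase : cj x⁻¹ ((Q : Subgroup H) ⊓ ↑Q') ≤ (Q : Subgroup H) ⊓ ↑Q := by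
    rw [inf_idem]
    exact hd.le_P inf_le_left
  have hw : Decomp Q (cj x⁻¹ ((Q : Subgroup H) ⊓ ↑Q')) w :=
    Decomp.single Q (tame_self Q) hbase
      (by rw [inf_idem]; exact mem_normalizer_iff_cj_eq.mpr hwQ)
  have hd2 : Decomp Q ((Q : Subgroup H) ⊓ ↑Q') h := by
    have := hd.append hw
    rwa [hwdef, mul_inv_cancel_left] at this
  obtain ⟨m, Qs, hs, hprod, htame, hnorm, hmem⟩ := extraction hd2 inf_le_left
  refine ⟨m, Qs, hs, hprod, htame, hnorm, ?_⟩
  intro i a ha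
  refine hmem i a (Subgroup.mem_inf.mpr ⟨hA ha, ?_⟩)
  rw [hQ'coe, mem_cj]
  exact hAh ⟨a, ha, rfl⟩
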